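/- If q(0,t) = ρe^{iθ} and q̄_x(0,t) = e^{-2iθ}q_x(0,t) with ρ ≠ 0, θ real, then V(λ)|_{x=0} satisfies K(λ)V(-λ)|_{x=0} = V(λ)|_{x=0}K(λ) where K(λ) = [[1, 2ie^{iθ}λρ/(ρ²-2λ²)],[2ie^{-iθ}λρ/(ρ²-2λ²), 1]]. -/

import Mathlib

/-
Write `V(λ) = [[A, B(λ)], [C(λ), -A]]`: since `Q² = -|q|²` is scalar, `A = i(|q|² - 2λ²)` is even in
`λ`, while `B` and `C` have odd parts `2λq` and `-2λq̄`. For `K = [[1, a], [b, 1]]` the relation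
`K V(-λ) = V(λ) K` then amounts to four scalar identities. The off-diagonal ones hold because
`|q|² = ρ²` makes `A` cancel the denominator `ρ² - 2λ²` of `K`; the diagonal ones hold because
`a / b = e^{2iθ}` is exactly the phase relating `q̄_x` to `q_x`.
-/

open Complex Matrix

noncomputable def sigma3 : Matrix (Fin 2) (Fin 2) ℂ := !![1, 0; 0, -1]

noncomputable def Vmat (q qx l : ℂ) : Matrix (Fin 2) (Fin 2) ℂ :=
  (-2 * I * l ^ 2) • sigma3 + (2 * l) • !![0, q; -(starRingEnd ℂ) q, 0]
    + (-I) • (!![0, qx; -(starRingEnd ℂ) qx, 0] * sigma3)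
    + (-I) • (!![0, q; -(starRingEnd ℂ) q, 0] * !![0, q; -(starRingEnd ℂ) q, 0] * sigma3)

/-- The non-Robin boundary matrix of Remark 2 (Eq. (4.12)). -/
noncomputable def Kρθ (ρ θ : ℝ) (l : ℂ) : Matrix (Fin 2) (Fin 2) ℂ :=
  !![1, 2 * I * exp (I * θ) * l * ρ / (ρ ^ 2 - 2 * l ^ 2);
     2 * I * exp (-(I * θ)) * l * ρ / (ρ ^ 2 - 2 * l ^ 2), 1]

open ComplexConjugate

lemma Vmat_eq (q qx l : ℂ) :
    Vmat q qx l =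
      !![I * (q * conj q - 2 * l ^ 2), 2 * l * q + I * qx;
         -(2 * l * conj q) + I * conj qx, -(I * (q * conj q - 2 * l ^ 2))] := by
  simp only [Vmat, sigma3, mul_fin_two, smul_of, of_add_of, smul_vec2, vec2_add, smul_eq_mul]
  congr 1
  refine vec2_eq (vec2_eq ?_ ?_) (vec2_eq ?_ ?_) <;> ring

lemma fin_two_intertwine_of_eq {R : Type*} [CommRing R] (a b A B C B' C' : R)
    (h₁₁ : a * C' = b * B) (h₁₂ : B' - B = 2 * a * A)
    (h₂₁ : C - C' = 2 * b * A) (h₂₂ : b * B' = a * C) :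
    !![1, a; b, 1] * !![A, B'; C', -A] = !![A, B; C, -A] * !![1, a; b, 1] := by
  rw [mul_fin_two, mul_fin_two]
  congr 1
  refine vec2_eq (vec2_eq ?_ ?_) (vec2_eq ?_ ?_)
  · linear_combination h₁₁
  · linear_combination h₁₂
  · linear_combination -h₂₁
  · linear_combination h₂₂

lemma conj_exp_I_mul_ofReal (θ : ℝ) : conj (exp (I * θ)) = (exp (I * θ))⁻¹ := by
  rw [← exp_conj, ← exp_neg, map_mul, conj_I, conj_ofReal, neg_mul]

theorem stmt6_general (ρ θ : ℝ) (q qx l : ℂ)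
    (hq : q = ρ * exp (I * θ))
    (hqx : (starRingEnd ℂ) qx = exp (-(2 * I * θ)) * qx)
    (hl : 2 * l ^ 2 ≠ (ρ : ℂ) ^ 2) :
    Kρθ ρ θ l * Vmat q qx (-l) = Vmat q qx l * Kρθ ρ θ l := by
  have hd : (ρ : ℂ) ^ 2 - 2 * l ^ 2 ≠ 0 := sub_ne_zero.2 hl.symm
  have hqbar : conj q = ρ * (exp (I * θ))⁻¹ := by
    rw [hq, map_mul, conj_ofReal, conj_exp_I_mul_ofReal]
  have hqxbar : conj qx = (exp (I * θ))⁻¹ ^ 2 * qx := by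
    rw [hqx, ← exp_neg, ← exp_nat_mul]; ring_nf
  have hqq : q * conj q = ρ ^ 2 := by rw [hqbar, hq]; field_simp
  rw [Vmat_eq, Vmat_eq, neg_sq, hqq, hqbar, hqxbar, hq, Kρθ, exp_neg]
  apply fin_two_intertwine_of_eq <;> field_simp
  case h₁₂ | h₂₁ => linear_combination (-4 * l * ρ * exp (I * θ)) * I_sq

theorem stmt6 (ρ θ : ℝ) (hρ : 0 < ρ) (q qx l : ℂ)
    (hq : q = ρ * exp (I * θ))
    (hqx : (starRingEnd ℂ) qx = exp (-(2 * I * θ)) * qx)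
    (hl : 2 * l ^ 2 ≠ (ρ : ℂ) ^ 2) :
    Kρθ ρ θ l * Vmat q qx (-l) = Vmat q qx l * Kρθ ρ θ l :=
  stmt6_general ρ θ q qx l hq hqx hl
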